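/- Let G be a minimal counterexample (fewest edges) to the claim that planar graphs of girth ≥ 6 and maximum degree Δ ≥ 4 satisfy χ'_s ≤ 3Δ+6. If a vertex v of degree k ≥ 5 has exactly k−2 neighbors of degree at most 2, then at most k−5 of its 2-neighbors are weak, i.e., v has at least three 2-neighbors whose other neighbor has degree at least 4. -/

import Mathlib

/-!
Let `B` be the neighbors `u` of `v` of degree at most two whose other neighbor (if any) has
degree at most three. If at most two 2-neighbors of `v` are not weak, `B` is nonempty. Deleting
all edges at `B` leaves a graph that is strongly `(3Δ+6)`-colorable, by minimality or, if it is a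
forest, because forests are strongly `(2Δ-1)`-colorable (an end `x` of a longest path `x y w …`
is a leaf, and so is every neighbor of `y` other than `w`). The coloring then extends greedily,
first to the edges `vu` and then to the edges `uw`: each of them conflicts with at most `3Δ+5`
colored edges, since `v` has only two neighbors of degree above two, at most two more
2-neighbors outside `B`, and `w` has degree at most three.
-/

open SimpleGraph Finset

universe u

variable {V : Type u}

/-- Two edges are at distance at most 2 (in the line graph sense): they share an
endpoint or some endpoint of one is adjacent to an endpoint of the other. -/
def edgesConflict (G : SimpleGraph V) (e f : Sym2 V) : Prop :=
  ∃ a b, a ∈ e ∧ b ∈ f ∧ (a = b ∨ G.Adj a b)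

/-- A strong edge coloring: distinct edges at distance at most 2 get distinct colors. -/
def IsStrongEdgeColoring (G : SimpleGraph V) {n : ℕ} (c : G.edgeSet → Fin n) : Prop :=
  ∀ e f : G.edgeSet, e ≠ f → edgesConflict G e.1 f.1 → c e ≠ c f

def HasStrongEdgeColoring (G : SimpleGraph V) (n : ℕ) : Prop :=
  ∃ c : G.edgeSet → Fin n, IsStrongEdgeColoring G c

/-- The strong chromatic index. -/
noncomputable def strongChromaticIndex (G : SimpleGraph V) : ℕ :=
  sInf { n | HasStrongEdgeColoring G n }

/-- A proper edge coloring: distinct edges sharing an endpoint get distinct colors. -/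
def IsProperEdgeColoring (G : SimpleGraph V) {n : ℕ} (c : G.edgeSet → Fin n) : Prop :=
  ∀ e f : G.edgeSet, e ≠ f → (∃ a, a ∈ e.1 ∧ a ∈ f.1) → c e ≠ c f

/-- The edge chromatic number (chromatic index). -/
noncomputable def edgeChromaticNumber (G : SimpleGraph V) : ℕ :=
  sInf { n | ∃ c : G.edgeSet → Fin n, IsProperEdgeColoring G c }

/-- `G` has `H` as a minor: disjoint nonempty connected branch sets, one per vertex of `H`,
with edges of `G` between branch sets corresponding to edges of `H`. -/
def HasMinor {W : Type} (G : SimpleGraph V) (H : SimpleGraph W) : Prop :=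
  ∃ b : W → Set V, (∀ w, (b w).Nonempty) ∧ (∀ w, (G.induce (b w)).Connected) ∧
    (Pairwise fun w₁ w₂ => Disjoint (b w₁) (b w₂)) ∧
    ∀ ⦃w₁ w₂⦄, H.Adj w₁ w₂ → ∃ a ∈ b w₁, ∃ a' ∈ b w₂, G.Adj a a'

/-- Planarity, via Wagner's theorem: no `K₅` minor and no `K₃,₃` minor. -/
def IsPlanar (G : SimpleGraph V) : Prop :=
  ¬ HasMinor G (⊤ : SimpleGraph (Fin 5)) ∧ ¬ HasMinor G (completeBipartiteGraph (Fin 3) (Fin 3))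

namespace SimpleGraph

lemma exists_eq_of_mem_edgeSet {G : SimpleGraph V} {f : Sym2 V} {x : V} (hf : f ∈ G.edgeSet)
    (hx : x ∈ f) : ∃ t, G.Adj x t ∧ f = s(x, t) := by
  obtain ⟨t, rfl⟩ := Sym2.mem_iff_exists.1 hx
  exact ⟨t, hf, rfl⟩

lemma mem_incidenceFinset_erase [Fintype V] [DecidableEq V] {G : SimpleGraph V}
    [DecidableRel G.Adj] {f g : Sym2 V} {x : V} (hf : f ∈ G.edgeSet) (hx : x ∈ f)
    (hfg : f ≠ g) :
    f ∈ (G.incidenceFinset x).erase g :=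
  mem_erase.2 ⟨hfg, (G.mem_incidenceFinset x f).2 ⟨hf, hx⟩⟩

lemma card_incidenceFinset_erase [Fintype V] [DecidableEq V] {G : SimpleGraph V}
    [DecidableRel G.Adj] {x y : V} (h : G.Adj x y) :
    #((G.incidenceFinset y).erase s(x, y)) = G.degree y - 1 := by
  rw [card_erase_of_mem ((G.mem_incidenceFinset y _).2 ⟨h, Sym2.mem_mk_right x y⟩),
    card_incidenceFinset_eq_degree]

lemma card_edgeFinset_deleteEdges_lt {G : SimpleGraph V} {s : Set (Sym2 V)}
    [Fintype G.edgeSet] [Fintype (G.deleteEdges s).edgeSet] {e : Sym2 V} (he : e ∈ G.edgeSet)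
    (hes : e ∈ s) :
    #(G.deleteEdges s).edgeFinset < #G.edgeFinset :=
  card_lt_card <| edgeFinset_ssubset_edgeFinset.2 <| (deleteEdges_le s).lt_of_ne fun h =>
    Set.disjoint_left.1 (deleteEdges_eq_self.1 h) he hes

end SimpleGraph

lemma edgesConflict_comm {G : SimpleGraph V} {e f : Sym2 V} (h : edgesConflict G e f) :
    edgesConflict G f e := by
  obtain ⟨a, b, ha, hb, hab⟩ := h
  exact ⟨b, a, hb, ha, hab.imp Eq.symm fun h => h.symm⟩

lemma edgesConflict_deleteEdges {G : SimpleGraph V} {D : Set (Sym2 V)}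
    (hD : ∀ d ∈ D, ∃ x ∈ d, ∀ g ∈ G.edgeSet, x ∈ g → g ∈ D) {e f : Sym2 V}
    (he : e ∈ G.edgeSet) (heD : e ∉ D) (hf : f ∈ G.edgeSet) (hfD : f ∉ D)
    (h : edgesConflict G e f) : edgesConflict (G.deleteEdges D) e f := by
  obtain ⟨a, b, ha, hb, hab⟩ := h
  refine ⟨a, b, ha, hb, hab.imp_right fun hadj =>
    (deleteEdges_adj ..).2 ⟨hadj, fun hD' => ?_⟩⟩
  obtain ⟨x, hx, hxD⟩ := hD _ hD'
  rcases Sym2.mem_iff.1 hx with rfl | rfl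
  · exact heD (hxD e he ha)
  · exact hfD (hxD f hf hb)

/-- An edge `f` is colored before `e` if it lies outside `F` or has rank at most `r e`; those of
them that conflict with `e` must be covered by fewer than `n` edges. -/
def FewPriorConflicts (G : SimpleGraph V) (F : Finset (Sym2 V)) (r : Sym2 V → ℕ) (n : ℕ)
    (e : Sym2 V) : Prop :=
  ∃ C : Finset (Sym2 V), #C < n ∧
    ∀ f ∈ G.edgeSet, f ≠ e → (f ∉ F ∨ r f ≤ r e) → edgesConflict G e f → f ∈ C

namespace HasStrongEdgeColoring

variable {G : SimpleGraph V} {n : ℕ}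

theorem mono {m : ℕ} (h : HasStrongEdgeColoring G n) (hnm : n ≤ m) :
    HasStrongEdgeColoring G m := by
  obtain ⟨c, hc⟩ := h
  exact ⟨Fin.castLE hnm ∘ c, fun e f hef hconf =>
    (Fin.castLE_injective hnm).ne (hc e f hef hconf)⟩

/-- Greedy recoloring of the edges of `F` in order of increasing rank. -/
theorem of_extend (r : Sym2 V → ℕ) (F : Finset (Sym2 V)) (c : G.edgeSet → Fin n)
    (hc : ∀ e f : G.edgeSet, e ≠ f → e.1 ∉ F → f.1 ∉ F → edgesConflict G e f →
      c e ≠ c f)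
    (hF : ∀ e ∈ F, e ∈ G.edgeSet → FewPriorConflicts G F r n e) :
    HasStrongEdgeColoring G n := by
  classical
  induction F using Finset.strongInduction generalizing c with
  | H F ih =>
  rcases F.eq_empty_or_nonempty with rfl | hne
  · exact ⟨c, fun e f hef => hc e f hef (notMem_empty _) (notMem_empty _)⟩
  obtain ⟨e, heF, hmin⟩ := F.exists_min_image r hne
  have hF' : ∀ e' ∈ F.erase e, e' ∈ G.edgeSet → FewPriorConflicts G (F.erase e) r n e' := by
    intro e' he' he'G
    obtain ⟨C, hC, hcov⟩ := hF e' (mem_of_mem_erase he') he'G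
    refine ⟨C, hC, fun f hf hfe' hfr => hcov f hf hfe' ?_⟩
    by_cases hfe : f = e
    · exact Or.inr (hfe ▸ hmin e' (mem_of_mem_erase he'))
    · simpa [hfe] using hfr
  have hnotF : ∀ f : G.edgeSet, f.1 ∉ F.erase e → f.1 ≠ e → f.1 ∉ F :=
    fun f hf hfe hfF => hf (mem_erase.2 ⟨hfe, hfF⟩)
  by_cases heG : e ∈ G.edgeSet
  swap
  · refine ih _ (erase_ssubset heF) c (fun e₁ f₁ hef he₁ hf₁ => hc e₁ f₁ hef ?_ ?_) hF'
    · exact hnotF e₁ he₁ fun h => heG (h ▸ e₁.2)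
    · exact hnotF f₁ hf₁ fun h => heG (h ▸ f₁.2)
  obtain ⟨C, hC, hcov⟩ := hF e heF heG
  have hcard :
      #((C.subtype fun f : Sym2 V => f ∈ G.edgeSet).image c) < #(univ : Finset (Fin n)) := by
    rw [card_univ, Fintype.card_fin]
    exact card_image_le.trans ((card_subtype _ C).trans_le (card_filter_le C _)) |>.trans_lt hC
  obtain ⟨col, -, hcol⟩ := exists_mem_notMem_of_card_lt_card hcard
  have hnew : ∀ f : G.edgeSet, f.1 ≠ e → f.1 ∉ F → edgesConflict G e f → col ≠ c f :=
    fun f hfe hfF hconf hcf => hcol (mem_image.2 ⟨f, mem_subtype.2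
      (hcov f f.2 hfe (Or.inl hfF) hconf), hcf.symm⟩)
  refine ih _ (erase_ssubset heF) (Function.update c ⟨e, heG⟩ col) ?_ hF'
  intro e₁ f₁ hef he₁ hf₁ hconf
  by_cases h₁ : e₁ = ⟨e, heG⟩
  · subst h₁
    have hfe : f₁.1 ≠ e := fun h => hef (Subtype.ext h.symm)
    rw [Function.update_self, Function.update_of_ne (Ne.symm hef)]
    exact hnew f₁ hfe (hnotF f₁ hf₁ hfe) hconf
  by_cases h₂ : f₁ = ⟨e, heG⟩
  · subst h₂
    have hee : e₁.1 ≠ e := fun h => h₁ (Subtype.ext h)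
    rw [Function.update_self, Function.update_of_ne h₁]
    exact (hnew e₁ hee (hnotF e₁ he₁ hee) (edgesConflict_comm hconf)).symm
  rw [Function.update_of_ne h₁, Function.update_of_ne h₂]
  exact hc e₁ f₁ hef (hnotF e₁ he₁ fun h => h₁ (Subtype.ext h))
    (hnotF f₁ hf₁ fun h => h₂ (Subtype.ext h)) hconf

/-- The condition on `D` ensures that two edges outside `D` conflicting in `G` still conflict in
`G.deleteEdges D`. -/
theorem of_deleteEdges (D : Finset (Sym2 V)) (r : Sym2 V → ℕ)
    (hD : ∀ d ∈ D, ∃ x ∈ d, ∀ g ∈ G.edgeSet, x ∈ g → g ∈ D)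
    (hH : HasStrongEdgeColoring (G.deleteEdges ↑D) n)
    (hF : ∀ e ∈ D, e ∈ G.edgeSet → FewPriorConflicts G D r n e) :
    HasStrongEdgeColoring G n := by
  classical
  obtain ⟨c, hc⟩ := hH
  have hmem : ∀ f : G.edgeSet, f.1 ∉ D → f.1 ∈ (G.deleteEdges ↑D).edgeSet :=
    fun f hf => by simp [edgeSet_deleteEdges, f.2, hf]
  have hpos : ∀ f : G.edgeSet, f.1 ∉ (G.deleteEdges ↑D).edgeSet → 0 < n := fun f hf => by
    obtain ⟨C, hC, -⟩ := hF f.1 (by_contra fun h => hf (hmem f h)) f.2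
    omega
  refine of_extend r D
    (fun f => if h : f.1 ∈ (G.deleteEdges ↑D).edgeSet then c ⟨f.1, h⟩
      else ⟨0, hpos f h⟩)
    (fun e f hef he hf hconf => ?_) hF
  rw [dif_pos (hmem e he), dif_pos (hmem f hf)]
  exact hc _ _ (fun h => hef (Subtype.ext (congrArg Subtype.val h :)))
    (edgesConflict_deleteEdges (D := ↑D) hD e.2 he f.2 hf hconf)

end HasStrongEdgeColoring

namespace SimpleGraph.IsAcyclic

variable {H : SimpleGraph V}

lemma eq_of_adj_of_mem_support (hH : H.IsAcyclic) {x y c t : V} {h : H.Adj x y}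
    {q : H.Walk y c} (hp : (q.cons h).IsPath) (ht : H.Adj x t) (hts : t ∈ (q.cons h).support) :
    t = y := by
  classical
  have hts' : t ∈ q.support := by simpa [ht.ne'] using hts
  have hlen := congrArg (fun p : H.Path x t => p.1.length)
    ((hH.subsingleton_path x t).elim (Path.singleton ht) ⟨_, hp.takeUntil hts⟩)
  simp only [Path.singleton, Walk.length_cons, Walk.length_nil, Walk.takeUntil_cons hts' ht.ne h]
    at hlen
  exact (Walk.eq_of_length_eq_zero (by omega : (q.takeUntil t hts').length = 0)).symm

lemma eq_of_adj_of_isLongest (hH : H.IsAcyclic) {x y c t : V} {h : H.Adj x y} {q : H.Walk y c}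
    (hp : (q.cons h).IsPath) (hmax : ∀ a b (p : H.Path a b), p.1.length ≤ (q.cons h).length)
    (ht : H.Adj x t) : t = y := by
  by_cases hts : t ∈ (q.cons h).support
  · exact hH.eq_of_adj_of_mem_support hp ht hts
  · have := hmax _ _ ⟨_, (Walk.cons_isPath_iff ht.symm _).2 ⟨hp, hts⟩⟩
    simp at this

theorem exists_adj_leaf [Fintype V] (hH : H.IsAcyclic) {x₀ y₀ : V} (h₀ : H.Adj x₀ y₀) :
    ∃ x y w, H.Adj x y ∧ H.Adj y w ∧ (∀ t, H.Adj x t → t = y) ∧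
      ∀ z, H.Adj y z → z ≠ w → ∀ t, H.Adj z t → t = y := by
  classical
  have : Nonempty (Σ a b, H.Path a b) := ⟨⟨x₀, y₀, Path.singleton h₀⟩⟩
  obtain ⟨⟨x, c, p, hp⟩, hmax⟩ :=
    Finite.exists_max fun p : Σ a b, H.Path a b => p.2.2.1.length
  replace hmax : ∀ a b (r : H.Path a b), r.1.length ≤ p.length :=
    fun a b r => hmax ⟨a, b, r⟩
  cases p with
  | nil => simpa using hmax _ _ (Path.singleton h₀)
  | @cons _ y _ h q =>
  -- a neighbor of `y` starting a path as long as `p` is a leaf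
  have leaf : ∀ z, H.Adj y z → z ∉ q.support → ∀ t, H.Adj z t → t = y := fun z hz hzq =>
    fun t => hH.eq_of_adj_of_isLongest (h := hz.symm) ((Walk.cons_isPath_iff _ _).2
      ⟨((Walk.cons_isPath_iff _ _).1 hp).1, hzq⟩) (by simpa using hmax)
  cases q with
  | nil =>
    refine ⟨x, _, x, h, h.symm, fun _ => hH.eq_of_adj_of_isLongest hp hmax,
      fun z hz _ => leaf z hz ?_⟩
    simpa using hz.ne'
  | @cons _ w _ h₂ q₂ =>
    refine ⟨x, y, w, h, h₂, fun _ => hH.eq_of_adj_of_isLongest hp hmax,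
      fun z hz hzw => leaf z hz ?_⟩
    exact fun hzq => hzw (hH.eq_of_adj_of_mem_support ((Walk.cons_isPath_iff _ _).1 hp).1 hz hzq)

end SimpleGraph.IsAcyclic

theorem SimpleGraph.IsAcyclic.hasStrongEdgeColoring [Fintype V] {H : SimpleGraph V}
    [DecidableRel H.Adj] (hH : H.IsAcyclic) {Δ : ℕ} (hΔ : ∀ x, H.degree x ≤ Δ) :
    HasStrongEdgeColoring H (2 * Δ - 1) := by
  classical
  by_cases hE : ∃ x y, H.Adj x y
  swap
  · have : IsEmpty H.edgeSet := ⟨fun ⟨e, he⟩ => by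
      induction e using Sym2.ind with | _ a b => exact hE ⟨a, b, he⟩⟩
    exact ⟨isEmptyElim, fun e => isEmptyElim e⟩
  obtain ⟨x₀, y₀, h₀⟩ := hE
  obtain ⟨x, y, w, hxy, hyw, hx, hy⟩ := hH.exists_adj_leaf h₀
  have hle : H.deleteEdges ↑({s(x, y)} : Finset (Sym2 V)) ≤ H := deleteEdges_le _
  have hedge : ∀ f ∈ H.edgeSet, x ∈ f → f = s(x, y) := fun f hf hxf => by
    obtain ⟨t, hxt, rfl⟩ := exists_eq_of_mem_edgeSet hf hxf
    rw [hx t hxt]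
  refine HasStrongEdgeColoring.of_deleteEdges {s(x, y)} (fun _ => 0) ?_
    ((hH.anti hle).hasStrongEdgeColoring fun z => (degree_le_of_le hle).trans (hΔ z)) ?_
  · simp only [mem_singleton, forall_eq]
    exact ⟨x, Sym2.mem_mk_left x y, hedge⟩
  simp only [mem_singleton, forall_eq]
  intro _
  refine ⟨(H.incidenceFinset y).erase s(x, y) ∪ (H.incidenceFinset w).erase s(y, w), ?_, ?_⟩
  · have := card_union_le ((H.incidenceFinset y).erase s(x, y))
      ((H.incidenceFinset w).erase s(y, w))
    rw [card_incidenceFinset_erase hxy, card_incidenceFinset_erase hyw] at this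
    have := hΔ y; have := hΔ w
    have : 0 < H.degree y := H.degree_pos_iff_exists_adj y |>.2 ⟨x, hxy.symm⟩
    omega
  -- every edge through `x` is `xy`, and every edge through a neighbor `z ≠ w` of `y` meets `y`
  rintro f hf hfe - ⟨a, b, ha, hb, hab⟩
  have hfy : y ∈ f → f ∈ (H.incidenceFinset y).erase s(x, y) := fun h =>
    mem_incidenceFinset_erase hf h hfe
  have hfx : x ∉ f := fun h => hfe (hedge f hf h)
  rcases Sym2.mem_iff.1 ha with rfl | rfl <;> rcases hab with rfl | hab
  · exact absurd hb hfx
  · exact mem_union_left _ (hfy (hx b hab ▸ hb))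
  · exact mem_union_left _ (hfy hb)
  · by_cases hbw : b = w
    · subst hbw
      by_cases hyf : a ∈ f
      · exact mem_union_left _ (hfy hyf)
      · exact mem_union_right _
          (mem_incidenceFinset_erase hf hb fun h => hyf (h ▸ Sym2.mem_mk_left _ _))
    · obtain ⟨t, hbt, rfl⟩ := exists_eq_of_mem_edgeSet hf hb
      exact mem_union_left _ (hfy (hy b hab hbw t hbt ▸ Sym2.mem_mk_right _ _))
termination_by H.edgeSet.ncard
decreasing_by
  have hxy' : s(x, y) ∈ H.edgeSet := hxy
  exact Set.ncard_lt_ncard ⟨edgeSet_mono hle, fun h => by simpa using h hxy'⟩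

namespace SimpleGraph

variable [Fintype V] [DecidableEq V] (G : SimpleGraph V) [DecidableRel G.Adj]

def edgesNear (a : V) (X : Finset V) : Finset (Sym2 V) :=
  G.incidenceFinset a ∪
    (G.neighborFinset a \ X).biUnion fun z => (G.incidenceFinset z).erase s(a, z)

variable {G}

lemma mem_edgesNear_of_mem {f : Sym2 V} {a : V} (X : Finset V) (hf : f ∈ G.edgeSet)
    (ha : a ∈ f) :
    f ∈ G.edgesNear a X :=
  mem_union_left _ ((G.mem_incidenceFinset a f).2 ⟨hf, ha⟩)

lemma mem_edgesNear_of_adj {f : Sym2 V} {a z : V} {X : Finset V} (hf : f ∈ G.edgeSet)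
    (hz : z ∈ f) (haz : G.Adj a z) (hzX : z ∉ X) : f ∈ G.edgesNear a X := by
  by_cases ha : a ∈ f
  · exact mem_edgesNear_of_mem X hf ha
  · refine mem_union_right _ (mem_biUnion.2 ⟨z, ?_, ?_⟩)
    · exact mem_sdiff.2 ⟨(G.mem_neighborFinset a z).2 haz, hzX⟩
    · exact mem_incidenceFinset_erase hf hz fun h => ha (h ▸ Sym2.mem_mk_left a z)

lemma card_edgesNear_le (a : V) (X : Finset V) :
    #(G.edgesNear a X) ≤ G.degree a + ∑ z ∈ G.neighborFinset a \ X, (G.degree z - 1) := by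
  refine (card_union_le _ _).trans (add_le_add (card_incidenceFinset_eq_degree G a).le
    (card_biUnion_le.trans (sum_le_sum fun z hz => ?_)))
  exact (card_incidenceFinset_erase ((G.mem_neighborFinset a z).1 (mem_sdiff.1 hz).1)).le

lemma card_edgesNear_le_of_degree_le {a b : V} {d : ℕ} (hab : G.Adj a b)
    (hd : ∀ z, G.Adj a z → z ≠ b → G.degree z ≤ d) :
    #(G.edgesNear a {b}) ≤ G.degree a + (G.degree a - 1) * (d - 1) := by
  refine (card_edgesNear_le a {b}).trans (add_le_add le_rfl ?_)
  have hcard : #(G.neighborFinset a \ {b}) = G.degree a - 1 := by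
    rw [card_sdiff_of_subset (by simpa using hab), card_neighborFinset_eq_degree, card_singleton]
  refine hcard ▸ sum_le_card_nsmul _ _ _ fun z hz => Nat.sub_le_sub_right (hd z ?_ ?_) 1
  · exact (G.mem_neighborFinset a z).1 (mem_sdiff.1 hz).1
  · simpa using (mem_sdiff.1 hz).2

end SimpleGraph

section WeakNeighbors

variable [Fintype V] [DecidableEq V] {G : SimpleGraph V} [DecidableRel G.Adj] {Δ : ℕ} {v u : V}
  {B : Finset V}

lemma fewPriorConflicts_inner (hΔ : ∀ x, G.degree x ≤ Δ)
    (hsum : ∑ b ∈ G.neighborFinset v \ B, (G.degree b - 1) ≤ 2 * Δ) (hu : u ∈ B)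
    (huv : G.Adj u v) (hdeg : G.degree u ≤ 2)
    (hweak : ∀ z, G.Adj u z → z ≠ v → G.degree z ≤ 3) :
    FewPriorConflicts G (B.biUnion fun x => G.incidenceFinset x) (fun e => if v ∈ e then 0 else 1)
      (3 * Δ + 6) s(u, v) := by
  refine ⟨G.edgesNear v B ∪ G.edgesNear u {v}, ?_, ?_⟩
  · have := card_union_le (G.edgesNear v B) (G.edgesNear u {v})
    have := card_edgesNear_le v B (G := G)
    have := card_edgesNear_le_of_degree_le huv hweak
    have := hΔ v
    omega
  -- an edge through a vertex of `B` is colored before `uv` only if it also passes through `v`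
  rintro f hf - hfr ⟨a, b, ha, hb, hab⟩
  have hvf : ∀ x ∈ B, x ∈ f → v ∈ f := fun x hx hxf => by
    rcases hfr with hfD | hr
    · exact absurd (mem_biUnion.2 ⟨x, hx, (G.mem_incidenceFinset x f).2 ⟨hf, hxf⟩⟩) hfD
    · simpa using hr
  rcases Sym2.mem_iff.1 ha with rfl | rfl <;> rcases hab with rfl | hab
  · exact mem_union_left _ (mem_edgesNear_of_mem _ hf (hvf a hu hb))
  · by_cases hbv : b = v
    · exact mem_union_left _ (mem_edgesNear_of_mem _ hf (hbv ▸ hb))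
    · exact mem_union_right _ (mem_edgesNear_of_adj hf hb hab (by simpa using hbv))
  · exact mem_union_left _ (mem_edgesNear_of_mem _ hf hb)
  · by_cases hbB : b ∈ B
    · exact mem_union_left _ (mem_edgesNear_of_mem _ hf (hvf b hbB hb))
    · exact mem_union_left _ (mem_edgesNear_of_adj hf hb hab hbB)

lemma fewPriorConflicts_outer (hΔ : ∀ x, G.degree x ≤ Δ) {w : V} (huv : G.Adj u v)
    (huw : G.Adj u w) (hwv : w ≠ v) (hdeg : G.degree u ≤ 2)
    (hweak : ∀ z, G.Adj u z → z ≠ v → G.degree z ≤ 3) :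
    FewPriorConflicts G (B.biUnion fun x => G.incidenceFinset x) (fun e => if v ∈ e then 0 else 1)
      (3 * Δ + 6) s(u, w) := by
  refine ⟨G.edgesNear u {v} ∪ G.incidenceFinset v ∪ G.edgesNear w {u}, ?_, ?_⟩
  · have := card_union_le (G.edgesNear u {v} ∪ G.incidenceFinset v) (G.edgesNear w {u})
    have := card_union_le (G.edgesNear u {v}) (G.incidenceFinset v)
    have := card_edgesNear_le_of_degree_le huv hweak
    have := card_edgesNear_le_of_degree_le huw.symm fun z _ _ => hΔ z
    have hw3 := hweak w huw hwv
    have : (G.degree w - 1) * (Δ - 1) ≤ 2 * (Δ - 1) := Nat.mul_le_mul_right _ (by omega)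
    have := G.card_incidenceFinset_eq_degree v
    have := hΔ v; have := hΔ w
    have : 0 < G.degree w := G.degree_pos_iff_exists_adj w |>.2 ⟨u, huw.symm⟩
    omega
  rintro f hf hfe - ⟨a, b, ha, hb, hab⟩
  rcases Sym2.mem_iff.1 ha with rfl | rfl <;> rcases hab with rfl | hab
  · exact mem_union_left _ (mem_union_left _ (mem_edgesNear_of_mem _ hf hb))
  · by_cases hbv : b = v
    · exact mem_union_left _
        (mem_union_right _ ((G.mem_incidenceFinset v f).2 ⟨hf, hbv ▸ hb⟩))
    · exact mem_union_left _ (mem_union_left _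
        (mem_edgesNear_of_adj hf hb hab (by simpa using hbv)))
  · exact mem_union_left _ (mem_union_left _ (mem_edgesNear_of_adj hf hb huw (by simpa using hwv)))
  · by_cases hbu : b = u
    · exact mem_union_left _ (mem_union_left _ (mem_edgesNear_of_mem _ hf (hbu ▸ hb)))
    · exact mem_union_right _ (mem_edgesNear_of_adj hf hb hab (by simpa using hbu))

theorem HasStrongEdgeColoring.of_deleteEdges_weak (hΔ : ∀ x, G.degree x ≤ Δ)
    (hBv : ∀ u ∈ B, G.Adj v u) (hBdeg : ∀ u ∈ B, G.degree u ≤ 2)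
    (hBweak : ∀ u ∈ B, ∀ z, G.Adj u z → z ≠ v → G.degree z ≤ 3)
    (hsum : ∑ b ∈ G.neighborFinset v \ B, (G.degree b - 1) ≤ 2 * Δ)
    (hH : HasStrongEdgeColoring (G.deleteEdges ↑(B.biUnion fun x => G.incidenceFinset x))
      (3 * Δ + 6)) :
    HasStrongEdgeColoring G (3 * Δ + 6) := by
  refine hH.of_deleteEdges _ (fun e => if v ∈ e then 0 else 1) (fun d hd => ?_) fun e he heG => ?_
  · obtain ⟨u, hu, hdu⟩ := mem_biUnion.1 hd
    exact ⟨u, ((G.mem_incidenceFinset u d).1 hdu).2,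
      fun g hg hug => mem_biUnion.2 ⟨u, hu, (G.mem_incidenceFinset u g).2 ⟨hg, hug⟩⟩⟩
  obtain ⟨u, hu, heu⟩ := mem_biUnion.1 he
  obtain ⟨w, huw, rfl⟩ := exists_eq_of_mem_edgeSet heG ((G.mem_incidenceFinset u e).1 heu).2
  by_cases hwv : w = v
  · subst hwv
    exact fewPriorConflicts_inner hΔ hsum hu huw (hBdeg u hu) (hBweak u hu)
  · exact fewPriorConflicts_outer hΔ (hBv u hu).symm huw hwv (hBdeg u hu) (hBweak u hu)

end WeakNeighbors

lemma HasMinor.mono {W : Type} {G G' : SimpleGraph V} {K : SimpleGraph W} (hG : G ≤ G')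
    (h : HasMinor G K) : HasMinor G' K := by
  obtain ⟨b, hne, hconn, hdisj, hadj⟩ := h
  refine ⟨b, hne, fun w => (hconn w).mono fun x y hxy => hG hxy, hdisj, fun w₁ w₂ hw => ?_⟩
  obtain ⟨a, ha, a', ha', haa'⟩ := hadj hw
  exact ⟨a, ha, a', ha', hG haa'⟩

lemma IsPlanar.anti {G G' : SimpleGraph V} (hG : G ≤ G') (h : IsPlanar G') : IsPlanar G :=
  ⟨fun hm => h.1 (hm.mono hG), fun hm => h.2 (hm.mono hG)⟩

section Counting

variable [Fintype V] [DecidableEq V] {G : SimpleGraph V} [DecidableRel G.Adj]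

lemma degree_le_three_of_weak {u v z : V} (hu : G.degree u ≤ 2) (huv : G.Adj u v)
    (huz : G.Adj u z) (hzv : z ≠ v)
    (hweak : ¬ (G.degree u = 2 ∧ ∀ w, G.Adj u w → w ≠ v → 4 ≤ G.degree w)) :
    G.degree z ≤ 3 := by
  have hu2 : G.degree u = 2 := by
    refine le_antisymm hu ?_
    rw [← card_neighborFinset_eq_degree, ← card_pair hzv.symm]
    exact card_le_card (by simp [insert_subset_iff, huv, huz])
  push Not at hweak
  obtain ⟨w, huw, hwv, hw⟩ := hweak hu2
  obtain rfl : z = w := by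
    by_contra hzw
    have := card_le_card (s := {v, z, w}) (t := G.neighborFinset u)
      (by simp [insert_subset_iff, huv, huz, huw])
    rw [card_eq_three.2 ⟨v, z, w, hzv.symm, hwv.symm, hzw, rfl⟩,
      card_neighborFinset_eq_degree] at this
    omega
  omega

lemma sum_degree_sub_one_sdiff_le {Δ : ℕ} (hΔ : ∀ x, G.degree x ≤ Δ) {v : V}
    {S T : Finset V} (hS : S ⊆ G.neighborFinset v) (hSc : G.degree v ≤ #S + 2) (hTS : T ⊆ S)
    (hT : #T ≤ 2) (hTdeg : ∀ b ∈ T, G.degree b ≤ 2) :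
    ∑ b ∈ G.neighborFinset v \ (S \ T), (G.degree b - 1) ≤ 2 * Δ := by
  rw [sdiff_sdiff_eq_sdiff_union (hTS.trans hS),
    sum_union (disjoint_sdiff_self_left.mono_right hTS)]
  have hhigh : ∑ b ∈ G.neighborFinset v \ S, (G.degree b - 1) ≤ 2 * (Δ - 1) := by
    refine (sum_le_card_nsmul _ _ (Δ - 1) fun b _ => Nat.sub_le_sub_right (hΔ b) 1).trans ?_
    rw [smul_eq_mul, card_sdiff_of_subset hS, card_neighborFinset_eq_degree]
    exact Nat.mul_le_mul_right _ (by omega)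
  have hlow : ∑ b ∈ T, (G.degree b - 1) ≤ #T * 1 :=
    sum_le_card_nsmul _ _ 1 fun b hb => by have := hTdeg b hb; omega
  have := card_le_card (hTS.trans hS)
  rw [card_neighborFinset_eq_degree] at this
  have := hΔ v
  omega

end Counting

lemma hasStrongEdgeColoring_of_lt_of_minimal {V : Type} [Fintype V] [DecidableEq V]
    {G H : SimpleGraph V} [DecidableRel G.Adj] [DecidableRel H.Adj] {Δ : ℕ} (hle : H ≤ G)
    (hplanar : IsPlanar G) (hgirth : 6 ≤ G.girth) (hΔ : ∀ x, G.degree x ≤ Δ)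
    (hlt : #H.edgeFinset < #G.edgeFinset)
    (hmin : ∀ (W : Type) [Fintype W] [DecidableEq W] (H : SimpleGraph W)
      [DecidableRel H.Adj], IsPlanar H → 6 ≤ H.girth → H.maxDegree ≤ Δ →
      #H.edgeFinset < #G.edgeFinset → HasStrongEdgeColoring H (3 * Δ + 6)) :
    HasStrongEdgeColoring H (3 * Δ + 6) := by
  have hΔH : ∀ x, H.degree x ≤ Δ := fun x => (degree_le_of_le hle).trans (hΔ x)
  by_cases hac : H.IsAcyclic
  · exact (hac.hasStrongEdgeColoring hΔH).mono (by omega)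
  · exact hmin V H (hplanar.anti hle) (hgirth.trans (girth_anti hle hac))
      (maxDegree_le_of_forall_degree_le _ _ hΔH) hlt

theorem min_cex_weak_strong_general (V : Type) [Fintype V] [DecidableEq V] (G : SimpleGraph V)
    [DecidableRel G.Adj] (Δ : ℕ)
    (hplanar : IsPlanar G) (hgirth : 6 ≤ G.girth) (hmax : G.maxDegree = Δ)
    (hcex : ¬ HasStrongEdgeColoring G (3 * Δ + 6))
    (hmin : ∀ (W : Type) [Fintype W] [DecidableEq W] (H : SimpleGraph W)
      [DecidableRel H.Adj], IsPlanar H → 6 ≤ H.girth → H.maxDegree ≤ Δ →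
      H.edgeFinset.card < G.edgeFinset.card → HasStrongEdgeColoring H (3 * Δ + 6)) :
    ∀ v, 5 ≤ G.degree v →
      ((G.neighborFinset v).filter fun u => G.degree u ≤ 2).card = G.degree v - 2 →
      3 ≤ ((G.neighborFinset v).filter fun u =>
        G.degree u = 2 ∧ ∀ w, G.Adj u w → w ≠ v → 4 ≤ G.degree w).card := by
  classical
  intro v hdeg hS
  by_contra! hT
  set S := (G.neighborFinset v).filter fun u => G.degree u ≤ 2
  set T := (G.neighborFinset v).filter fun u =>
    G.degree u = 2 ∧ ∀ w, G.Adj u w → w ≠ v → 4 ≤ G.degree w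
  have hΔ : ∀ x, G.degree x ≤ Δ := hmax ▸ G.degree_le_maxDegree
  have hTS : T ⊆ S := fun u hu => by
    simp only [S, T, mem_filter] at hu ⊢
    exact ⟨hu.1, hu.2.1.le⟩
  have hB : ∀ u ∈ S \ T, G.Adj v u ∧ G.degree u ≤ 2 ∧
      ¬ (G.degree u = 2 ∧ ∀ w, G.Adj u w → w ≠ v → 4 ≤ G.degree w) := fun u hu => by
    simp only [S, T, mem_sdiff, mem_filter, mem_neighborFinset] at hu
    exact ⟨hu.1.1, hu.1.2, fun h => hu.2 ⟨hu.1.1, h⟩⟩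
  obtain ⟨u₀, hu₀⟩ : (S \ T).Nonempty := by
    rw [← card_pos, card_sdiff_of_subset hTS]
    omega
  have hweak : ∀ u ∈ S \ T, ∀ z, G.Adj u z → z ≠ v → G.degree z ≤ 3 :=
    fun u hu z huz hzv =>
      degree_le_three_of_weak (hB u hu).2.1 (hB u hu).1.symm huz hzv (hB u hu).2.2
  have hsum : ∑ b ∈ G.neighborFinset v \ (S \ T), (G.degree b - 1) ≤ 2 * Δ :=
    sum_degree_sub_one_sdiff_le hΔ (filter_subset _ _) (by omega) hTS (by omega)
      fun b hb => (mem_filter.1 (hTS hb)).2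
  have hvu₀ : s(v, u₀) ∈ (S \ T).biUnion fun x => G.incidenceFinset x := mem_biUnion.2
    ⟨u₀, hu₀, (G.mem_incidenceFinset _ _).2 ⟨(hB u₀ hu₀).1, Sym2.mem_mk_right _ _⟩⟩
  have hH := hasStrongEdgeColoring_of_lt_of_minimal (deleteEdges_le _) hplanar hgirth hΔ
    (card_edgeFinset_deleteEdges_lt (hB u₀ hu₀).1 (mem_coe.2 hvu₀)) hmin
  exact hcex (.of_deleteEdges_weak hΔ (fun u hu => (hB u hu).1) (fun u hu => (hB u hu).2.1)
    hweak hsum hH)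

/-- In a minimal counterexample to "planar, girth ≥ 6, max degree Δ ≥ 4 ⟹ χ'ₛ ≤ 3Δ+6",
every vertex v of degree k ≥ 5 with exactly k−2 neighbors of degree at most 2 has at
least three 2-neighbors that are not weak, i.e. whose other neighbor has degree ≥ 4. -/
theorem min_cex_weak_strong (V : Type) [Fintype V] [DecidableEq V] (G : SimpleGraph V)
    [DecidableRel G.Adj] (Δ : ℕ)
    (hplanar : IsPlanar G) (hgirth : 6 ≤ G.girth) (hmax : G.maxDegree = Δ) (hΔ : 4 ≤ Δ)
    (hcex : ¬ HasStrongEdgeColoring G (3 * Δ + 6))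
    (hmin : ∀ (W : Type) [Fintype W] [DecidableEq W] (H : SimpleGraph W)
      [DecidableRel H.Adj], IsPlanar H → 6 ≤ H.girth → H.maxDegree ≤ Δ →
      H.edgeFinset.card < G.edgeFinset.card → HasStrongEdgeColoring H (3 * Δ + 6)) :
    ∀ v, 5 ≤ G.degree v →
      ((G.neighborFinset v).filter fun u => G.degree u ≤ 2).card = G.degree v - 2 →
      3 ≤ ((G.neighborFinset v).filter fun u =>
        G.degree u = 2 ∧ ∀ w, G.Adj u w → w ≠ v → 4 ≤ G.degree w).card :=
  min_cex_weak_strong_general V G Δ hplanar hgirth hmax hcex hmin
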